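/- Let Q and R be symmetric bilinear forms on V_m and V_n respectively making each a *-representation, and let q = Q(e_m, e_{−m}) and r = R(ẽ_n, ẽ_{−n}). For 0 ≤ k ≤ min(m, n), set 𝔰_k = m + n − 2k and b_{−𝔰_k} = Σ_{i=0}^{k} (−1)^i · e_{−m+2i} ⊗ ẽ_{−n+2(k−i)}. Then (Q⊗R)( b_{−𝔰_k}, X^{𝔰_k} b_{−𝔰_k} ) = 𝔰_k! · (−1)^k · q · r · Σ_{l=0}^{k} (m−l)! (n−k+l)! / ( l! (k−l)! ). -/

import Mathlib

open scoped TensorProduct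

/-- `V m` is the (m+1)-dimensional real vector space underlying the irreducible
`sl₂(ℝ)`-module `V_m`. -/
abbrev V (m : ℕ) : Type := Fin (m + 1) → ℝ

/-- The standard basis of `V m`; `eb m i` represents the basis vector `e_{-m+2i}`. -/
noncomputable def eb (m : ℕ) : Module.Basis (Fin (m + 1)) ℝ (V m) := Pi.basisFun ℝ (Fin (m + 1))

/-- `e m i` is the basis vector `e_{-m+2i}` of `V_m`, for `0 ≤ i ≤ m`. -/
noncomputable def e (m : ℕ) (i : Fin (m + 1)) : V m := eb m i

/-- The operator `X` on `V_m`: `X e_{-m+2i} = (m-i)(i+1) e_{-m+2(i+1)}`,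
with the convention `e_{m+2} = 0` (for `i = m` the coefficient `(m-i)(i+1)` is `0`). -/
noncomputable def Xop (m : ℕ) : V m →ₗ[ℝ] V m :=
  (eb m).constr ℝ fun i =>
    if h : (i : ℕ) < m then
      (((m : ℝ) - (i : ℕ)) * ((i : ℕ) + 1)) • e m ⟨(i : ℕ) + 1, by omega⟩
    else 0

/-- The operator `Y` on `V_m`: `Y e_{-m+2i} = e_{-m+2(i-1)}`,
with the convention `e_{-m-2} = 0`. -/
noncomputable def Yop (m : ℕ) : V m →ₗ[ℝ] V m :=
  (eb m).constr ℝ fun i =>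
    if h : 0 < (i : ℕ) then e m ⟨(i : ℕ) - 1, by omega⟩ else 0

/-- The operator `H` on `V_m`: `H e_{-m+2i} = (-m+2i) e_{-m+2i}`. -/
noncomputable def Hop (m : ℕ) : V m →ₗ[ℝ] V m :=
  (eb m).constr ℝ fun i => (-(m : ℝ) + 2 * (i : ℕ)) • e m i

/-- The action of `X` on `V_m ⊗ V_n`: `X (u ⊗ v) = (X u) ⊗ v + u ⊗ (X v)`. -/
noncomputable def Xt (m n : ℕ) : (V m ⊗[ℝ] V n) →ₗ[ℝ] (V m ⊗[ℝ] V n) :=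
  LinearMap.rTensor (V n) (Xop m) + LinearMap.lTensor (V m) (Xop n)

/-- The action of `Y` on `V_m ⊗ V_n`: `Y (u ⊗ v) = (Y u) ⊗ v + u ⊗ (Y v)`. -/
noncomputable def Yt (m n : ℕ) : (V m ⊗[ℝ] V n) →ₗ[ℝ] (V m ⊗[ℝ] V n) :=
  LinearMap.rTensor (V n) (Yop m) + LinearMap.lTensor (V m) (Yop n)

/-- The action of `H` on `V_m ⊗ V_n`: `H (u ⊗ v) = (H u) ⊗ v + u ⊗ (H v)`. -/
noncomputable def Ht (m n : ℕ) : (V m ⊗[ℝ] V n) →ₗ[ℝ] (V m ⊗[ℝ] V n) :=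
  LinearMap.rTensor (V n) (Hop m) + LinearMap.lTensor (V m) (Hop n)

/-- The vector `b_{-m-n+2k} = ∑_{i=0}^{k} (-1)^i e_{-m+2i} ⊗ ẽ_{-n+2(k-i)}` in `V_m ⊗ V_n`. -/
noncomputable def bvec (m n k : ℕ) (hkm : k ≤ m) (hkn : k ≤ n) : V m ⊗[ℝ] V n :=
  ∑ i : Fin (k + 1), ((-1 : ℝ)) ^ (i : ℕ) •
    (e m ⟨(i : ℕ), by omega⟩ ⊗ₜ[ℝ] e n ⟨k - (i : ℕ), by omega⟩)


open Finset
/-- Extended basis family with junk value `0` out of range. -/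
noncomputable def E (m : ℕ) (t : ℕ) : V m :=
  if h : t < m + 1 then e m ⟨t, h⟩ else 0

lemma E_eq (m t : ℕ) (h : t < m + 1) : E m t = e m ⟨t, h⟩ := dif_pos h

lemma E_zero (m t : ℕ) (h : m + 1 ≤ t) : E m t = 0 := dif_neg (by omega)

lemma Xop_E (m t : ℕ) :
    Xop m (E m t) = (((m : ℝ) - t) * (t + 1)) • E m (t + 1) := by
  rcases lt_trichotomy t m with h | h | h
  · rw [E_eq m t (by omega), E_eq m (t+1) (by omega)]
    show Xop m (eb m ⟨t, by omega⟩) = _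
    rw [Xop, Module.Basis.constr_basis]
    simp only [h, dif_pos]
  · rw [E_eq m t (by omega), E_zero m (t+1) (by omega), smul_zero]
    show Xop m (eb m ⟨t, by omega⟩) = 0
    rw [Xop, Module.Basis.constr_basis]
    rw [dif_neg (show ¬((⟨t, by omega⟩ : Fin (m+1)) : ℕ) < m by show ¬ t < m; omega)]
  · rw [E_zero m t (by omega), E_zero m (t+1) (by omega)]
    simp

lemma Xpow_E (m p t : ℕ) :
    (Xop m ^ p) (E m t) =
      (((m - t).descFactorial p * (t + p).descFactorial p : ℕ) : ℝ) • E m (t + p) := by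
  induction p with
  | zero => simp
  | succ p IH =>
    rw [pow_succ', Module.End.mul_apply, IH, map_smul, Xop_E, smul_smul]
    by_cases ht : t ≤ m
    · by_cases h : t + p ≤ m
      · congr 1
        have e1 : (m - t).descFactorial (p+1) = (m - t - p) * (m - t).descFactorial p :=
          Nat.descFactorial_succ _ _
        have e2 : (t + (p+1)).descFactorial (p+1) = (t+p+1) * (t + p).descFactorial p :=
          Nat.succ_descFactorial_succ (t+p) p
        rw [e1, e2]
        have e4 : m - t - p = m - (t+p) := by omega
        rw [e4]
        push_cast [Nat.cast_sub (show t + p ≤ m from h)]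
        ring
      · have z1 : (m - t).descFactorial (p+1) = 0 :=
          Nat.descFactorial_eq_zero_iff_lt.mpr (by omega)
        have z2 : (m - t).descFactorial p = 0 :=
          Nat.descFactorial_eq_zero_iff_lt.mpr (by omega)
        rw [z1, z2]
        simp
    · have hz : E m (t+p+1) = 0 := E_zero m _ (by omega)
      have hz' : E m (t+(p+1)) = 0 := E_zero m _ (by omega)
      rw [hz, hz', smul_zero, smul_zero]

lemma Hop_e (m : ℕ) (i : Fin (m+1)) :
    Hop m (e m i) = (-(m : ℝ) + 2 * (i : ℕ)) • e m i := by
  show Hop m (eb m i) = _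
  rw [Hop, Module.Basis.constr_basis]

lemma Yop_e (m t : ℕ) (h : t + 1 < m + 1) :
    Yop m (e m ⟨t + 1, h⟩) = e m ⟨t, by omega⟩ := by
  show Yop m (eb m ⟨t + 1, h⟩) = _
  rw [Yop, Module.Basis.constr_basis]
  rw [dif_pos (show 0 < ((⟨t+1, h⟩ : Fin (m+1)) : ℕ) by show 0 < t+1; omega)]
  rfl

/-- The values of a `*`-invariant symmetric bilinear form on basis vectors. -/
lemma Q_values (m : ℕ) (Q : LinearMap.BilinForm ℝ (V m))
    (hQY : ∀ u v : V m, Q (Yop m u) v = Q u (Yop m v))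
    (hQH : ∀ u v : V m, Q (Hop m u) v = - Q u (Hop m v))
    (q : ℝ) (hq : q = Q (e m (Fin.last m)) (e m 0)) (i j : Fin (m+1)) :
    Q (e m i) (e m j) = if (i : ℕ) + (j : ℕ) = m then q else 0 := by
  by_cases hij : (i : ℕ) + (j : ℕ) = m
  · rw [if_pos hij]
    have diag : ∀ d : ℕ, ∀ hd : d ≤ m,
        Q (e m ⟨m - d, by omega⟩) (e m ⟨d, by omega⟩) = q := by
      intro d
      induction d with
      | zero =>
        intro _
        have e1 : (⟨m - 0, by omega⟩ : Fin (m+1)) = Fin.last m := Fin.ext (by simp [Fin.last])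
        have e2 : (⟨0, by omega⟩ : Fin (m+1)) = (0 : Fin (m+1)) := Fin.ext (by simp)
        rw [e1, e2, ← hq]
      | succ d IH =>
        intro hd
        have h1 : Yop m (e m ⟨m - d, by omega⟩) = e m ⟨m - (d+1), by omega⟩ := by
          have e1 : (⟨m - d, by omega⟩ : Fin (m+1)) = ⟨(m - (d+1)) + 1, by omega⟩ :=
            Fin.ext (by show m - d = (m - (d+1)) + 1; omega)
          rw [e1, Yop_e]
        have h2 : Yop m (e m ⟨d + 1, by omega⟩) = e m ⟨d, by omega⟩ := Yop_e m d (by omega)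
        have := hQY (e m ⟨m - d, by omega⟩) (e m ⟨d + 1, by omega⟩)
        rw [h1, h2] at this
        rw [this, IH (by omega)]
    have hd := diag (j : ℕ) (by omega)
    have hi : i = ⟨m - (j : ℕ), by omega⟩ := Fin.ext (by show (i:ℕ) = m - (j:ℕ); omega)
    have hjj : j = ⟨(j : ℕ), by omega⟩ := Fin.ext rfl
    rw [← hi, ← hjj] at hd
    exact hd
  · rw [if_neg hij]
    have h := hQH (e m i) (e m j)
    rw [Hop_e m i, Hop_e m j] at h
    simp only [map_smul, LinearMap.smul_apply, smul_eq_mul] at h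
    have hne : ((i : ℕ) : ℝ) + ((j : ℕ) : ℝ) - (m : ℝ) ≠ 0 := by
      intro hc
      apply hij
      have : ((i : ℕ) + (j : ℕ) : ℝ) = (m : ℝ) := by push_cast; linarith
      exact_mod_cast this
    have hz : (((i : ℕ) : ℝ) + ((j : ℕ) : ℝ) - (m : ℝ)) * Q (e m i) (e m j) = 0 := by
      linarith
    rcases mul_eq_zero.mp hz with h' | h'
    · exact absurd h' hne
    · exact h'

lemma QEE (m : ℕ) (Q : LinearMap.BilinForm ℝ (V m))
    (hQY : ∀ u v : V m, Q (Yop m u) v = Q u (Yop m v))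
    (hQH : ∀ u v : V m, Q (Hop m u) v = - Q u (Hop m v))
    (q : ℝ) (hq : q = Q (e m (Fin.last m)) (e m 0)) (t t' : ℕ) (ht : t ≤ m) :
    Q (E m t) (E m t') = if t + t' = m then q else 0 := by
  rw [E_eq m t (by omega)]
  by_cases ht' : t' ≤ m
  · rw [E_eq m t' (by omega), Q_values m Q hQY hQH q hq]
  · rw [E_zero m t' (by omega), if_neg (by omega)]
    simp

lemma Xt_pow_tmul (m n s : ℕ) (u : V m) (v : V n) :
    (Xt m n ^ s) (u ⊗ₜ[ℝ] v) =
      ∑ p ∈ range (s+1), (s.choose p : ℝ) •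
        (((Xop m ^ p) u) ⊗ₜ[ℝ] ((Xop n ^ (s-p)) v)) := by
  have hc : Commute (LinearMap.rTensor (V n) (Xop m)) (LinearMap.lTensor (V m) (Xop n)) := by
    show _ * _ = _ * _
    rw [Module.End.mul_eq_comp, Module.End.mul_eq_comp,
      LinearMap.rTensor_comp_lTensor, LinearMap.lTensor_comp_rTensor]
  rw [Xt, Commute.add_pow hc, LinearMap.sum_apply]
  apply Finset.sum_congr rfl
  intro p _
  rw [Module.End.mul_apply, Module.End.mul_apply, Module.End.natCast_apply,
    LinearMap.rTensor_pow, LinearMap.lTensor_pow]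
  rw [map_nsmul, map_nsmul, LinearMap.lTensor_tmul, LinearMap.rTensor_tmul]
  rw [← Nat.cast_smul_eq_nsmul ℝ]

lemma bvec_E (m n k : ℕ) (hkm : k ≤ m) (hkn : k ≤ n) :
    bvec m n k hkm hkn =
      ∑ t ∈ range (k+1), (-1:ℝ)^t • ((E m t) ⊗ₜ[ℝ] (E n (k - t))) := by
  rw [bvec, ← Fin.sum_univ_eq_sum_range]
  apply Finset.sum_congr rfl
  intro i _
  rw [E_eq m (i : ℕ) (by omega), E_eq n (k - (i : ℕ)) (by omega)]

lemma cast_descFactorial {x t : ℕ} (h : t ≤ x) :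
    ((x.descFactorial t : ℕ) : ℝ) = (x.factorial : ℝ) / ((x - t).factorial : ℝ) := by
  rw [Nat.descFactorial_eq_factorial_mul_choose]
  push_cast
  rw [Nat.cast_choose ℝ h]
  have h1 : ((t.factorial : ℕ) : ℝ) ≠ 0 := Nat.cast_ne_zero.mpr (Nat.factorial_ne_zero t)
  have h2 : (((x - t).factorial : ℕ) : ℝ) ≠ 0 := Nat.cast_ne_zero.mpr (Nat.factorial_ne_zero _)
  field_simp

lemma termB (m n k i j : ℕ) (hi : i ≤ k) (hj : j ≤ k) (hkm : k ≤ m) (hkn : k ≤ n) :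
    (if m - i - j ≤ m + n - 2*k then
      (if i + j ≤ m then
        ((m+n-2*k).choose (m-i-j) : ℝ) *
          (((m-j).descFactorial (m-i-j) * (j+(m-i-j)).descFactorial (m-i-j) : ℕ) : ℝ) *
          (((n-(k-j)).descFactorial ((m+n-2*k)-(m-i-j)) *
            ((k-j)+((m+n-2*k)-(m-i-j))).descFactorial ((m+n-2*k)-(m-i-j)) : ℕ) : ℝ)
      else 0) else 0)
    = (k.choose j : ℝ) * ((m-j).choose i : ℝ) * ((n-k+j).choose (k-i) : ℝ) *
        ((m+n-2*k).factorial : ℝ) * ((m-i).factorial : ℝ) * ((n-k+i).factorial : ℝ) /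
        (k.factorial : ℝ) := by
  by_cases h1 : i + j ≤ m
  · by_cases h2 : m - i - j ≤ m + n - 2*k
    · rw [if_pos h2, if_pos h1]
      have e1 : j + (m-i-j) = m - i := by omega
      have e2 : n - (k-j) = n - k + j := by omega
      have e3 : (k-j) + ((m+n-2*k)-(m-i-j)) = n - k + i := by omega
      rw [e1, e2, e3]
      push_cast
      rw [Nat.cast_choose ℝ h2,
        cast_descFactorial (show m-i-j ≤ m-j by omega),
        cast_descFactorial (show m-i-j ≤ m-i by omega),
        cast_descFactorial (show (m+n-2*k)-(m-i-j) ≤ n-k+j by omega),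
        cast_descFactorial (show (m+n-2*k)-(m-i-j) ≤ n-k+i by omega),
        Nat.cast_choose ℝ hj,
        Nat.cast_choose ℝ (show i ≤ m-j by omega),
        Nat.cast_choose ℝ (show k-i ≤ n-k+j by omega)]
      have eA : (m-j) - (m-i-j) = i := by omega
      have eB : (m-i) - (m-i-j) = j := by omega
      have eC : (n-k+j) - ((m+n-2*k)-(m-i-j)) = k - i := by omega
      have eD : (n-k+i) - ((m+n-2*k)-(m-i-j)) = k - j := by omega
      have eF : (m-j) - i = m-i-j := by omega
      have eG : (n-k+j) - (k-i) = (m+n-2*k)-(m-i-j) := by omega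
      rw [eA, eB, eC, eD, eF, eG]
      have nz : ∀ x : ℕ, (x.factorial : ℝ) ≠ 0 :=
        fun x => Nat.cast_ne_zero.mpr (Nat.factorial_ne_zero x)
      field_simp
    · rw [if_neg h2]
      have : (n-k+j).choose (k-i) = 0 := Nat.choose_eq_zero_of_lt (by omega)
      rw [this]
      simp
  · have hz : (m-j).choose i = 0 := Nat.choose_eq_zero_of_lt (by omega)
    rw [if_neg h1, hz]
    simp

/-- Alternating-sum / finite-difference step. -/
lemma alt_sum_succ (k : ℕ) (g : ℕ → ℝ) :
    ∑ j ∈ range (k+2), (-1:ℝ)^j * ((k+1).choose j) * g j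
      = ∑ j ∈ range (k+1), (-1:ℝ)^j * (k.choose j) * (g j - g (j+1)) := by
  have h1 : ∑ j ∈ range (k+2), (-1:ℝ)^j * ((k+1).choose j) * g j
      = (∑ j ∈ range (k+1), (-1:ℝ)^(j+1) * ((k+1).choose (j+1)) * g (j+1))
        + (-1:ℝ)^0 * ((k+1).choose 0) * g 0 := by
    rw [Finset.sum_range_succ']
  have h2 : ∀ j, ((k+1).choose (j+1) : ℝ) = (k.choose j : ℝ) + (k.choose (j+1) : ℝ) := by
    intro j
    rw [Nat.choose_succ_succ]
    push_cast
    ring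
  have h3 : ∑ j ∈ range (k+1), (-1:ℝ)^(j+1) * ((k.choose (j+1) : ℝ)) * g (j+1)
      = (∑ j ∈ range (k+1), (-1:ℝ)^j * (k.choose j) * g j) - g 0 := by
    have h4 : ∑ j ∈ range (k+2), (-1:ℝ)^j * (k.choose j) * g j
        = (∑ j ∈ range (k+1), (-1:ℝ)^(j+1) * (k.choose (j+1)) * g (j+1))
          + (-1:ℝ)^0 * (k.choose 0 : ℝ) * g 0 := by
      rw [Finset.sum_range_succ']
    have h5 : ∑ j ∈ range (k+2), (-1:ℝ)^j * (k.choose j) * g j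
        = ∑ j ∈ range (k+1), (-1:ℝ)^j * (k.choose j) * g j := by
      rw [Finset.sum_range_succ, Nat.choose_succ_self]
      simp
    rw [h5] at h4
    simp only [pow_zero, Nat.choose_zero_right, Nat.cast_one, one_mul] at h4
    linarith
  calc ∑ j ∈ range (k+2), (-1:ℝ)^j * ((k+1).choose j) * g j
      = (∑ j ∈ range (k+1), ((-1:ℝ)^(j+1) * (k.choose j) * g (j+1)
            + (-1:ℝ)^(j+1) * (k.choose (j+1)) * g (j+1))) + g 0 := by
        rw [h1]
        simp only [pow_zero, Nat.choose_zero_right, Nat.cast_one, one_mul]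
        congr 1
        apply Finset.sum_congr rfl
        intro j _
        rw [h2]
        ring
    _ = (∑ j ∈ range (k+1), (-1:ℝ)^(j+1) * (k.choose j) * g (j+1))
          + ((∑ j ∈ range (k+1), (-1:ℝ)^j * (k.choose j) * g j) - g 0) + g 0 := by
        rw [Finset.sum_add_distrib, h3]
    _ = ∑ j ∈ range (k+1), (-1:ℝ)^j * (k.choose j) * (g j - g (j+1)) := by
        have h6 : ∑ j ∈ range (k+1), (-1:ℝ)^(j+1) * (k.choose j) * g (j+1)
            + ∑ j ∈ range (k+1), (-1:ℝ)^j * (k.choose j) * g j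
          = ∑ j ∈ range (k+1), (-1:ℝ)^j * (k.choose j) * (g j - g (j+1)) := by
          rw [← Finset.sum_add_distrib]
          exact Finset.sum_congr rfl fun j _ => by ring
        linarith

/-- Core alternating binomial identity. -/
lemma core_sum (a b : ℕ) : ∀ (k i : ℕ), i ≤ k →
    ∑ j ∈ range (k+1), (-1:ℝ)^j * (k.choose j) *
      (((k+a-j).choose i : ℝ) * ((b+j).choose (k-i) : ℝ))
      = (-1:ℝ)^(k+i) * (k.choose i) := by
  intro k
  induction k with
  | zero =>
    intro i hi
    interval_cases i
    simp
  | succ k IH =>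
    intro i hi
    have hrw : ∑ j ∈ range (k+1+1), (-1:ℝ)^j * ((k+1).choose j) *
        (((k+1+a-j).choose i : ℝ) * ((b+j).choose (k+1-i) : ℝ))
        = ∑ j ∈ range (k+1), (-1:ℝ)^j * (k.choose j) *
          ((fun t => ((k+1+a-t).choose i : ℝ) * ((b+t).choose (k+1-i) : ℝ)) j
            - (fun t => ((k+1+a-t).choose i : ℝ) * ((b+t).choose (k+1-i) : ℝ)) (j+1)) :=
      alt_sum_succ k _
    rw [hrw]
    rcases Nat.eq_zero_or_pos i with h0 | hpos
    · subst h0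
      have key : ∀ j ∈ range (k+1), (-1:ℝ)^j * (k.choose j) *
          ((fun t => ((k+1+a-t).choose 0 : ℝ) * ((b+t).choose (k+1-0) : ℝ)) j
            - (fun t => ((k+1+a-t).choose 0 : ℝ) * ((b+t).choose (k+1-0) : ℝ)) (j+1))
          = -((-1:ℝ)^j * (k.choose j) *
              (((k+a-j).choose 0 : ℝ) * ((b+j).choose (k-0) : ℝ))) := by
        intro j hj
        simp only [Nat.choose_zero_right, Nat.cast_one, one_mul, Nat.sub_zero]
        have hp : (b+(j+1)).choose (k+1) = (b+j).choose k + (b+j).choose (k+1) := by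
          rw [show b+(j+1) = (b+j)+1 from rfl, Nat.choose_succ_succ]
        rw [hp]
        push_cast
        ring
      rw [Finset.sum_congr rfl key, Finset.sum_neg_distrib]
      rw [IH 0 (Nat.zero_le k)]
      simp [pow_succ, pow_add]
    · obtain ⟨i', rfl⟩ : ∃ i', i = i' + 1 := ⟨i - 1, by omega⟩
      rcases Nat.lt_or_ge i' k with hik | hik
      · -- i'+1 ≤ k
        have key : ∀ j ∈ range (k+1), (-1:ℝ)^j * (k.choose j) *
            ((fun t => ((k+1+a-t).choose (i'+1) : ℝ) * ((b+t).choose (k+1-(i'+1)) : ℝ)) j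
              - (fun t => ((k+1+a-t).choose (i'+1) : ℝ) * ((b+t).choose (k+1-(i'+1)) : ℝ)) (j+1))
            = (-1:ℝ)^j * (k.choose j) *
                (((k+a-j).choose i' : ℝ) * ((b+j).choose (k-i') : ℝ))
              - (-1:ℝ)^j * (k.choose j) *
                (((k+a-j).choose (i'+1) : ℝ) * ((b+j).choose (k-(i'+1)) : ℝ)) := by
          intro j hj
          simp only [Finset.mem_range] at hj
          have e1 : k+1+a-j = (k+a-j)+1 := by omega
          have e2 : k+1+a-(j+1) = k+a-j := by omega
          have e3 : k+1-(i'+1) = k-i' := by omega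
          have e4 : k-i' = (k-(i'+1))+1 := by omega
          have p1 : ((k+a-j)+1).choose (i'+1)
              = (k+a-j).choose i' + (k+a-j).choose (i'+1) := Nat.choose_succ_succ _ _
          have p2 : (b+(j+1)).choose ((k-(i'+1))+1)
              = (b+j).choose (k-(i'+1)) + (b+j).choose ((k-(i'+1))+1) := by
            rw [show b+(j+1) = (b+j)+1 from rfl, Nat.choose_succ_succ]
          simp only [e1, e3, e4, e2, p1, p2]
          push_cast
          ring
        rw [Finset.sum_congr rfl key, Finset.sum_sub_distrib]
        rw [IH i' (by omega), IH (i'+1) (by omega)]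
        have pas : ((k+1).choose (i'+1) : ℝ) = (k.choose i' : ℝ) + (k.choose (i'+1) : ℝ) := by
          rw [Nat.choose_succ_succ]; push_cast; ring
        rw [pas]
        rw [show k+1+(i'+1) = (k+i')+2 from by ring, show k+(i'+1) = (k+i')+1 from by ring]
        rw [pow_add, pow_add, pow_add]
        ring
      · -- i = k+1
        have hik' : i' = k := by omega
        subst hik'
        have key : ∀ j ∈ range (i'+1), (-1:ℝ)^j * (i'.choose j) *
            ((fun t => ((i'+1+a-t).choose (i'+1) : ℝ) * ((b+t).choose (i'+1-(i'+1)) : ℝ)) j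
              - (fun t => ((i'+1+a-t).choose (i'+1) : ℝ) * ((b+t).choose (i'+1-(i'+1)) : ℝ)) (j+1))
            = (-1:ℝ)^j * (i'.choose j) *
                (((i'+a-j).choose i' : ℝ) * ((b+j).choose (i'-i') : ℝ)) := by
          intro j hj
          simp only [Finset.mem_range] at hj
          have e1 : i'+1+a-j = (i'+a-j)+1 := by omega
          have e2 : i'+1+a-(j+1) = i'+a-j := by omega
          have p1 : ((i'+a-j)+1).choose (i'+1)
              = (i'+a-j).choose i' + (i'+a-j).choose (i'+1) := Nat.choose_succ_succ _ _
          simp only [e1, e2, p1, Nat.sub_self, Nat.choose_zero_right]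
          push_cast
          ring
        rw [Finset.sum_congr rfl key, IH i' le_rfl]
        simp [pow_add]
/-- With `𝔰_k = m + n - 2k`, `q = Q(e_m, e_{-m})` and `r = R(ẽ_n, ẽ_{-n})`,
`(Q ⊗ R)(b_{-𝔰_k}, X^{𝔰_k} b_{-𝔰_k}) = 𝔰_k! (-1)^k q r ∑_{l=0}^{k} (m-l)! (n-k+l)! / (l! (k-l)!)`. -/
theorem omega_value (m n : ℕ)
    (Q : LinearMap.BilinForm ℝ (V m)) (R : LinearMap.BilinForm ℝ (V n))
    (hQsym : ∀ u v : V m, Q u v = Q v u)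
    (hQX : ∀ u v : V m, Q (Xop m u) v = Q u (Xop m v))
    (hQY : ∀ u v : V m, Q (Yop m u) v = Q u (Yop m v))
    (hQH : ∀ u v : V m, Q (Hop m u) v = - Q u (Hop m v))
    (hRsym : ∀ u v : V n, R u v = R v u)
    (hRX : ∀ u v : V n, R (Xop n u) v = R u (Xop n v))
    (hRY : ∀ u v : V n, R (Yop n u) v = R u (Yop n v))
    (hRH : ∀ u v : V n, R (Hop n u) v = - R u (Hop n v))
    (q r : ℝ)
    (hq : q = Q (e m (Fin.last m)) (e m 0))
    (hr : r = R (e n (Fin.last n)) (e n 0))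
    (k : ℕ) (hkm : k ≤ m) (hkn : k ≤ n) :
    LinearMap.BilinForm.tmul Q R (bvec m n k hkm hkn)
        ((Xt m n ^ (m + n - 2 * k)) (bvec m n k hkm hkn)) =
      ((m + n - 2 * k).factorial : ℝ) * (-1 : ℝ) ^ k * q * r *
        ∑ l : Fin (k + 1),
          (((m - (l : ℕ)).factorial : ℝ) * ((n - k + (l : ℕ)).factorial : ℝ)) /
            (((l : ℕ).factorial : ℝ) * ((k - (l : ℕ)).factorial : ℝ)) := by
  have expand2 : (Xt m n ^ (m + n - 2*k))
        (∑ t ∈ range (k+1), (-1:ℝ)^t • ((E m t) ⊗ₜ[ℝ] (E n (k - t)))) =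
      ∑ j ∈ range (k+1), ∑ p ∈ range ((m + n - 2*k)+1),
        ((-1:ℝ)^j * ((m + n - 2*k).choose p : ℝ) *
          (((m - j).descFactorial p * (j + p).descFactorial p : ℕ) : ℝ) *
          (((n - (k-j)).descFactorial ((m + n - 2*k)-p) *
            ((k-j) + ((m + n - 2*k)-p)).descFactorial ((m + n - 2*k)-p) : ℕ) : ℝ)) •
          ((E m (j + p)) ⊗ₜ[ℝ] (E n ((k - j) + ((m + n - 2*k) - p)))) := by
    rw [map_sum]
    apply Finset.sum_congr rfl
    intro j _
    rw [map_smul, Xt_pow_tmul, Finset.smul_sum]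
    apply Finset.sum_congr rfl
    intro p _
    rw [Xpow_E, Xpow_E, TensorProduct.smul_tmul_smul, smul_smul, smul_smul]
    congr 1
    push_cast
    ring
  rw [bvec_E m n k hkm hkn, expand2]
  simp only [map_sum, LinearMap.sum_apply, map_smul, LinearMap.smul_apply, smul_eq_mul,
    LinearMap.BilinForm.tensorDistrib_tmul, Finset.mul_sum]
  -- Step 1: for each j, swap the (p,i) sums and collapse the p-sum using the
  -- weight condition encoded in the values of Q and R.
  have step1 : ∀ j ∈ Finset.range (k+1),
      (∑ p ∈ Finset.range (m + n - 2*k + 1), ∑ i ∈ Finset.range (k + 1),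
        (-1:ℝ)^j * ((m + n - 2*k).choose p : ℝ) *
            (((m - j).descFactorial p * (j + p).descFactorial p : ℕ) : ℝ) *
            (((n - (k - j)).descFactorial (m + n - 2*k - p) *
                (k - j + (m + n - 2*k - p)).descFactorial (m + n - 2*k - p) : ℕ) : ℝ) *
          ((-1:ℝ)^i * ((R (E n (k - i))) (E n (k - j + (m + n - 2*k - p))) *
            (Q (E m i)) (E m (j + p)))))
      = ∑ i ∈ Finset.range (k+1), (-1:ℝ)^i * (-1:ℝ)^j * (r*q) *
          (if m - i - j ≤ m + n - 2*k then
            (if i + j ≤ m then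
              ((m+n-2*k).choose (m-i-j) : ℝ) *
                (((m-j).descFactorial (m-i-j) * (j+(m-i-j)).descFactorial (m-i-j) : ℕ) : ℝ) *
                (((n-(k-j)).descFactorial ((m+n-2*k)-(m-i-j)) *
                  ((k-j)+((m+n-2*k)-(m-i-j))).descFactorial ((m+n-2*k)-(m-i-j)) : ℕ) : ℝ)
            else 0) else 0) := by
    intro j hj
    rw [Finset.sum_comm]
    apply Finset.sum_congr rfl
    intro i hi
    simp only [Finset.mem_range, Nat.lt_succ_iff] at hi hj
    have hQv : ∀ p : ℕ, (Q (E m i)) (E m (j+p)) = if i + (j+p) = m then q else 0 :=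
      fun p => QEE m Q hQY hQH q hq i (j+p) (by omega)
    have hRv : ∀ p : ℕ, (R (E n (k-i))) (E n (k - j + (m + n - 2*k - p))) =
        if (k-i) + (k - j + (m + n - 2*k - p)) = n then r else 0 :=
      fun p => QEE n R hRY hRH r hr (k-i) _ (by omega)
    have hterm : ∀ p ∈ Finset.range (m + n - 2*k + 1),
        ((-1:ℝ)^j * ((m + n - 2*k).choose p : ℝ) *
            (((m - j).descFactorial p * (j + p).descFactorial p : ℕ) : ℝ) *
            (((n - (k - j)).descFactorial (m + n - 2*k - p) *
                (k - j + (m + n - 2*k - p)).descFactorial (m + n - 2*k - p) : ℕ) : ℝ) *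
          ((-1:ℝ)^i * ((R (E n (k - i))) (E n (k - j + (m + n - 2*k - p))) *
            (Q (E m i)) (E m (j + p)))))
        = if p = m - i - j then
            (if i + j ≤ m then
              (-1:ℝ)^i * (-1:ℝ)^j * (r*q) *
                (((m+n-2*k).choose p : ℝ) *
                  (((m-j).descFactorial p * (j+p).descFactorial p : ℕ) : ℝ) *
                  (((n-(k-j)).descFactorial ((m+n-2*k)-p) *
                    ((k-j)+((m+n-2*k)-p)).descFactorial ((m+n-2*k)-p) : ℕ) : ℝ))
            else 0) else 0 := by
      intro p hp
      simp only [Finset.mem_range, Nat.lt_succ_iff] at hp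
      rw [hQv p, hRv p]
      by_cases hc : i + (j + p) = m
      · rw [if_pos hc, if_pos (show k - i + (k - j + (m + n - 2*k - p)) = n by omega),
          if_pos (show p = m - i - j by omega), if_pos (show i + j ≤ m by omega)]
        ring
      · rw [if_neg hc]
        by_cases hp' : p = m - i - j
        · rw [if_pos hp', if_neg (show ¬ i + j ≤ m by omega)]
          ring
        · rw [if_neg hp']
          ring
    rw [Finset.sum_congr rfl hterm, Finset.sum_ite_eq']
    simp only [Finset.mem_range, Nat.lt_succ_iff]
    split_ifs <;> ring
  rw [Finset.sum_congr rfl step1, Finset.sum_comm]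
  -- Step 2: rewrite each (i,j) term in closed binomial form via `termB`.
  have step2 : ∀ i ∈ Finset.range (k+1), ∀ j ∈ Finset.range (k+1),
      ((-1:ℝ)^i * (-1:ℝ)^j * (r*q) *
          (if m - i - j ≤ m + n - 2*k then
            (if i + j ≤ m then
              ((m+n-2*k).choose (m-i-j) : ℝ) *
                (((m-j).descFactorial (m-i-j) * (j+(m-i-j)).descFactorial (m-i-j) : ℕ) : ℝ) *
                (((n-(k-j)).descFactorial ((m+n-2*k)-(m-i-j)) *
                  ((k-j)+((m+n-2*k)-(m-i-j))).descFactorial ((m+n-2*k)-(m-i-j)) : ℕ) : ℝ)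
            else 0) else 0))
      = ((-1:ℝ)^i * (r*q) *
          (((m+n-2*k).factorial : ℝ) * ((m-i).factorial : ℝ) * ((n-k+i).factorial : ℝ) /
            (k.factorial : ℝ))) *
        ((-1:ℝ)^j * (k.choose j : ℝ) *
          (((k+(m-k)-j).choose i : ℝ) * (((n-k)+j).choose (k-i) : ℝ))) := by
    intro i hi j hj
    simp only [Finset.mem_range, Nat.lt_succ_iff] at hi hj
    rw [termB m n k i j hi hj hkm hkn]
    rw [show ((k+(m-k)-j).choose i : ℝ) = ((m-j).choose i : ℝ) from by
      rw [show k+(m-k)-j = m-j from by omega]]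
    ring
  rw [Finset.sum_congr rfl (fun i hi => Finset.sum_congr rfl (step2 i hi))]
  -- Step 3: evaluate the inner sum over j by the core alternating identity.
  have step3 : ∀ i ∈ Finset.range (k+1),
      (∑ j ∈ Finset.range (k+1),
        ((-1:ℝ)^i * (r*q) *
          (((m+n-2*k).factorial : ℝ) * ((m-i).factorial : ℝ) * ((n-k+i).factorial : ℝ) /
            (k.factorial : ℝ))) *
        ((-1:ℝ)^j * (k.choose j : ℝ) *
          (((k+(m-k)-j).choose i : ℝ) * (((n-k)+j).choose (k-i) : ℝ))))
      = ((-1:ℝ)^i * (r*q) *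
          (((m+n-2*k).factorial : ℝ) * ((m-i).factorial : ℝ) * ((n-k+i).factorial : ℝ) /
            (k.factorial : ℝ))) *
        ((-1:ℝ)^(k+i) * (k.choose i : ℝ)) := by
    intro i hi
    simp only [Finset.mem_range, Nat.lt_succ_iff] at hi
    rw [← Finset.mul_sum, core_sum (m-k) (n-k) k i hi]
  rw [Finset.sum_congr rfl step3]
  rw [Fin.sum_univ_eq_sum_range (fun l => ((m + n - 2 * k).factorial : ℝ) * (-1:ℝ)^k * q * r *
    (((m - l).factorial : ℝ) * ((n - k + l).factorial : ℝ) /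
      (((l.factorial : ℕ) : ℝ) * (((k - l).factorial : ℕ) : ℝ))) ) (k+1)]
  apply Finset.sum_congr rfl
  intro i hi
  simp only [Finset.mem_range, Nat.lt_succ_iff] at hi
  have key : (-1:ℝ)^i * (-1:ℝ)^(k+i) = (-1:ℝ)^k := by
    rw [pow_add, show (-1:ℝ)^i * ((-1:ℝ)^k * (-1:ℝ)^i) = ((-1:ℝ)^(i+i)) * (-1:ℝ)^k from by
      rw [pow_add]; ring, Even.neg_one_pow ⟨i, rfl⟩, one_mul]
  have nz : ∀ x : ℕ, (x.factorial : ℝ) ≠ 0 :=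
    fun x => Nat.cast_ne_zero.mpr (Nat.factorial_ne_zero x)
  calc ((-1:ℝ)^i * (r*q) *
          (((m+n-2*k).factorial : ℝ) * ((m-i).factorial : ℝ) * ((n-k+i).factorial : ℝ) /
            (k.factorial : ℝ))) *
        ((-1:ℝ)^(k+i) * (k.choose i : ℝ))
      = ((-1:ℝ)^i * (-1:ℝ)^(k+i)) * ((r*q) *
          (((m+n-2*k).factorial : ℝ) * ((m-i).factorial : ℝ) * ((n-k+i).factorial : ℝ) /
            (k.factorial : ℝ)) * (k.choose i : ℝ)) := by ring
    _ = (-1:ℝ)^k * ((r*q) *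
          (((m+n-2*k).factorial : ℝ) * ((m-i).factorial : ℝ) * ((n-k+i).factorial : ℝ) /
            (k.factorial : ℝ)) * (k.choose i : ℝ)) := by rw [key]
    _ = ((m + n - 2 * k).factorial : ℝ) * (-1:ℝ)^k * q * r *
        (((m - i).factorial : ℝ) * ((n - k + i).factorial : ℝ) /
          (((i.factorial : ℕ) : ℝ) * (((k - i).factorial : ℕ) : ℝ))) := by
      rw [Nat.cast_choose ℝ hi]
      field_simp
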